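/- arXiv:1205.4517 — 3 statements merged into one kernel-verified Lean document; each statement's English description precedes it below -/
import Mathlib

section
/- If $\sum_i E_i X E_i^* = \sum_j F_j X F_j^*$ for all $X \in \mathcal{B}(V)$, where $V$ is finite dimensional, then the linear spans of $\{E_i\}$ and $\{F_j\}$ in $\mathcal{B}(V)$ coincide. -/
/-!
The quantity `∑ i, |⟪A i, X⟫|²` (Hilbert–Schmidt inner product) is a sesquilinear expression in
`X` whose coefficients `∑ i, A i r s * conj (A i p q)` are entries of the superoperator
`X ↦ ∑ i, A i * X * (A i)ᴴ` evaluated at matrix units, so it is the same for two families defining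
the same superoperator. A matrix is orthogonal to the span of a family exactly when this sum
vanishes; hence both spans have the same orthogonal complement and, being finite-dimensional,
coincide.
-/

open Matrix

open scoped InnerProductSpace ComplexConjugate

section InnerProductSpace

variable {𝕜 E : Type*} [RCLike 𝕜] [NormedAddCommGroup E] [InnerProductSpace 𝕜 E]

theorem mem_orthogonal_span_range_iff {ι : Type*} (v : ι → E) (x : E) :
    x ∈ (Submodule.span 𝕜 (Set.range v))ᗮ ↔ ∀ i, ⟪v i, x⟫_𝕜 = 0 := by
  simp only [Submodule.span_range_eq_iSup, ← Submodule.iInf_orthogonal, Submodule.mem_iInf,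
    Submodule.mem_orthogonal_singleton_iff_inner_right]

theorem sum_norm_inner_sq_eq_zero_iff {ι : Type*} [Fintype ι] (v : ι → E) (x : E) :
    ∑ i, ‖⟪v i, x⟫_𝕜‖ ^ 2 = 0 ↔ ∀ i, ⟪v i, x⟫_𝕜 = 0 := by
  simp [Finset.sum_eq_zero_iff_of_nonneg fun i _ => sq_nonneg ‖⟪v i, x⟫_𝕜‖]

theorem span_range_eq_of_sum_norm_inner_sq_eq {ι κ : Type*} [Fintype ι] [Fintype κ]
    (v : ι → E) (w : κ → E) (h : ∀ x, ∑ i, ‖⟪v i, x⟫_𝕜‖ ^ 2 = ∑ j, ‖⟪w j, x⟫_𝕜‖ ^ 2) :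
    Submodule.span 𝕜 (Set.range v) = Submodule.span 𝕜 (Set.range w) := by
  have h_orth : (Submodule.span 𝕜 (Set.range v))ᗮ = (Submodule.span 𝕜 (Set.range w))ᗮ := by
    ext x
    rw [mem_orthogonal_span_range_iff, mem_orthogonal_span_range_iff,
      ← sum_norm_inner_sq_eq_zero_iff, ← sum_norm_inner_sq_eq_zero_iff, h]
  have := FiniteDimensional.span_of_finite 𝕜 (Set.finite_range v)
  have := FiniteDimensional.span_of_finite 𝕜 (Set.finite_range w)
  rw [← Submodule.orthogonal_orthogonal (Submodule.span 𝕜 (Set.range v)), h_orth,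
    Submodule.orthogonal_orthogonal]

end InnerProductSpace

namespace Matrix

variable {𝕜 : Type*} [RCLike 𝕜] {m n : Type*}

noncomputable def toEuclideanFlat : Matrix m n 𝕜 ≃ₗ[𝕜] EuclideanSpace 𝕜 (m × n) :=
  (LinearEquiv.curry 𝕜 𝕜 m n).symm.trans (WithLp.linearEquiv 2 𝕜 (m × n → 𝕜)).symm

theorem toEuclideanFlat_apply (A : Matrix m n 𝕜) (pq : m × n) :
    A.toEuclideanFlat pq = A pq.1 pq.2 := rfl

variable [Fintype n]

theorem sum_mul_single_mul_conjTranspose_apply [DecidableEq n] {ι : Type*} [Fintype ι]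
    (A : ι → Matrix m n 𝕜) (q s : n) (p r : m) :
    (∑ i, A i * single s q (1 : 𝕜) * (A i)ᴴ) r p = ∑ i, A i r s * conj (A i p q) := by
  simp [Matrix.sum_apply, mul_apply, single_apply, ite_and]

variable [Fintype m]

theorem inner_toEuclideanFlat (A X : Matrix m n 𝕜) :
    ⟪A.toEuclideanFlat, X.toEuclideanFlat⟫_𝕜 = ∑ p, ∑ q, conj (A p q) * X p q := by
  simp [PiLp.inner_apply, toEuclideanFlat_apply, Fintype.sum_prod_type, mul_comm]

theorem sum_norm_inner_toEuclideanFlat_sq [DecidableEq n] {ι : Type*} [Fintype ι]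
    (A : ι → Matrix m n 𝕜) (X : Matrix m n 𝕜) :
    ((∑ i, ‖⟪(A i).toEuclideanFlat, X.toEuclideanFlat⟫_𝕜‖ ^ 2 : ℝ) : 𝕜) =
      ∑ r, ∑ s, ∑ p, ∑ q,
        X p q * conj (X r s) * (∑ i, A i * single s q (1 : 𝕜) * (A i)ᴴ) r p := by
  simp only [RCLike.ofReal_pow, ← RCLike.mul_conj, inner_toEuclideanFlat,
    sum_mul_single_mul_conjTranspose_apply, map_sum, map_mul, RCLike.conj_conj,
    Finset.sum_mul, Finset.mul_sum]
  refine Finset.sum_comm.trans (Finset.sum_congr rfl fun r _ => ?_)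
  refine Finset.sum_comm.trans (Finset.sum_congr rfl fun s _ => ?_)
  refine Finset.sum_comm.trans (Finset.sum_congr rfl fun p _ => ?_)
  refine Finset.sum_comm.trans (Finset.sum_congr rfl fun q _ => ?_)
  exact Finset.sum_congr rfl fun i _ => by ring

theorem span_range_eq_of_sum_mul_mul_conjTranspose_eq {ι κ : Type*} [Fintype ι] [Fintype κ]
    (A : ι → Matrix m n 𝕜) (B : κ → Matrix m n 𝕜)
    (h : ∀ X : Matrix n n 𝕜, ∑ i, A i * X * (A i)ᴴ = ∑ j, B j * X * (B j)ᴴ) :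
    Submodule.span 𝕜 (Set.range A) = Submodule.span 𝕜 (Set.range B) := by
  classical
  have h_flat : Submodule.span 𝕜 (Set.range (toEuclideanFlat ∘ A)) =
      Submodule.span 𝕜 (Set.range (toEuclideanFlat ∘ B)) := by
    refine span_range_eq_of_sum_norm_inner_sq_eq _ _ fun x => ?_
    obtain ⟨X, rfl⟩ := toEuclideanFlat.surjective x
    apply RCLike.ofReal_injective (K := 𝕜)
    simp only [Function.comp_apply, sum_norm_inner_toEuclideanFlat_sq, h]
  rw [Set.range_comp, Set.range_comp, Submodule.span_image_linearEquiv,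
    Submodule.span_image_linearEquiv] at h_flat
  exact Submodule.map_injective_of_injective toEuclideanFlat.injective h_flat

end Matrix

/-- If two superoperators given by Kraus families agree on all of B(V),
then the linear spans of the Kraus operators coincide. -/
theorem stmt0 {n m k : ℕ} (E : Fin m → Matrix (Fin n) (Fin n) ℂ)
    (F : Fin k → Matrix (Fin n) (Fin n) ℂ)
    (h : ∀ X : Matrix (Fin n) (Fin n) ℂ,
      ∑ i, E i * X * (E i)ᴴ = ∑ j, F j * X * (F j)ᴴ) :
    Submodule.span ℂ (Set.range E) = Submodule.span ℂ (Set.range F) :=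
  span_range_eq_of_sum_mul_mul_conjTranspose_eq E F h
end

section
/- Let $P$ be a projection on a finite dimensional Hilbert space $\mathcal{H}$, $E \subset \mathcal{B}(\mathcal{H})$ a linear subspace such that $P X^* Y P = \langle X, Y \rangle P$ for all $X,Y \in E$, where $\langle \cdot,\cdot \rangle$ is a (necessarily Hermitian) inner product on $E$ (assumed nondegenerate). Let $C$ be the range of $P$. Then the map $E \otimes C \to \mathcal{H}$ given on simple tensors by $X \otimes v \mapsto X v$ is an isometric embedding. -/
open Matrix

/-- The map `E ⊗ C → H`, `X ⊗ v ↦ X v`, preserves inner products on simple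
tensors (hence is an isometric embedding of `E ⊗ C` into `H`). -/
theorem stmt1 {n : ℕ} (P : Matrix (Fin n) (Fin n) ℂ)
    (hP : P * P = P) (hPsa : Pᴴ = P)
    (E : Submodule ℂ (Matrix (Fin n) (Fin n) ℂ))
    (B : Matrix (Fin n) (Fin n) ℂ → Matrix (Fin n) (Fin n) ℂ → ℂ)
    (hB : ∀ X ∈ E, ∀ Y ∈ E, P * Xᴴ * Y * P = B X Y • P)
    (hpos : ∀ X ∈ E, X ≠ 0 → 0 < (B X X).re ∧ (B X X).im = 0) :
    ∀ X ∈ E, ∀ Y ∈ E, ∀ v w : Fin n → ℂ,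
      P.mulVec v = v → P.mulVec w = w →
      star (X.mulVec v) ⬝ᵥ (Y.mulVec w) = B X Y * (star v ⬝ᵥ w) := by
  intro X hX Y hY v w hv hw
  have key : star (X.mulVec v) ⬝ᵥ (Y.mulVec w)
      = star v ⬝ᵥ (P * Xᴴ * Y * P).mulVec w := by
    conv_lhs => rw [← hv, ← hw]
    simp [star_mulVec, mulVec_mulVec, dotProduct_mulVec, vecMul_vecMul, hPsa,
      Matrix.mul_assoc]
  rw [key, hB X hX Y hY, smul_mulVec, dotProduct_smul, hw, smul_eq_mul]
end

section
/- For the irreducible $(n+1)$-dimensional representation of $\mathfrak{sl}_2$ on $V$, and any $0 \leq d \leq n$, one has $\operatorname{Tr}((\operatorname{ad}[f])^{2d}(e^d) \cdot e^d) = (-1)^d \, (2d)! \, \operatorname{Tr}(e^d f^d)$, where $\operatorname{ad}[f](X) = fX - Xf$. -/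
open Matrix

/-- `h` in the `(n+1)`-dimensional irreducible representation of `sl₂`. -/
noncomputable def Hmat (n : ℕ) : Matrix (Fin (n + 1)) (Fin (n + 1)) ℂ :=
  Matrix.diagonal fun j => ((n : ℂ) - 2 * ((j : ℕ) : ℂ)) / 2

/-- `e` in the `(n+1)`-dimensional irreducible representation of `sl₂`. -/
noncomputable def Emat (n : ℕ) : Matrix (Fin (n + 1)) (Fin (n + 1)) ℂ :=
  Matrix.of fun i j =>
    if (j : ℕ) = (i : ℕ) + 1 then (((i : ℕ) : ℂ) + 1) * ((n : ℂ) - ((i : ℕ) : ℂ)) else 0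

/-- `f` in the `(n+1)`-dimensional irreducible representation of `sl₂`. -/
noncomputable def Fmat (n : ℕ) : Matrix (Fin (n + 1)) (Fin (n + 1)) ℂ :=
  Matrix.of fun i j => if (i : ℕ) = (j : ℕ) + 1 then 1 else 0

/-- `ad[f]` acting on `B(V)`. -/
noncomputable def adF (n : ℕ) (X : Matrix (Fin (n + 1)) (Fin (n + 1)) ℂ) :
    Matrix (Fin (n + 1)) (Fin (n + 1)) ℂ :=
  Fmat n * X - X * Fmat n

namespace Stmt13Aux

open Polynomial Finset

/- ## Polynomial part -/

noncomputable def cpoly (n d : ℕ) : Polynomial ℂ :=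
  ∏ t ∈ Finset.range d, ((X + C ((t : ℂ) + 1)) * (C ((n : ℂ) - (t : ℂ)) - X))

lemma cpoly_eval (n d : ℕ) (z : ℂ) :
    (cpoly n d).eval z = ∏ t ∈ Finset.range d, ((z + (t : ℂ) + 1) * ((n : ℂ) - z - (t : ℂ))) := by
  rw [cpoly, eval_prod]
  refine Finset.prod_congr rfl fun t _ => ?_
  simp only [eval_mul, eval_add, eval_sub, eval_X, eval_C]
  ring

lemma factor_ne (a b : ℂ) : (X + C a) * (C b - X) ≠ 0 := by
  apply mul_ne_zero
  · exact (monic_X_add_C a).ne_zero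
  · intro h
    have : (C b - X).coeff 1 = 0 := by rw [h]; simp
    simp [coeff_sub] at this

lemma factor_natDegree (a b : ℂ) : ((X + C a) * (C b - X)).natDegree = 2 := by
  have h1 : (X + C a).natDegree = 1 := natDegree_X_add_C a
  have h2 : (C b - X).natDegree = 1 := by
    have : C b - X = -(X - C b) := by ring
    rw [this, natDegree_neg, natDegree_X_sub_C]
  rw [natDegree_mul ((monic_X_add_C a).ne_zero) (by
      intro h; rw [h] at h2; simp at h2), h1, h2]

lemma factor_leadingCoeff (a b : ℂ) : ((X + C a) * (C b - X)).leadingCoeff = -1 := by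
  rw [leadingCoeff_mul]
  have h2 : (C b - X).natDegree = 1 := by
    have : C b - X = -(X - C b) := by ring
    rw [this, natDegree_neg, natDegree_X_sub_C]
  rw [(monic_X_add_C a).leadingCoeff, one_mul, leadingCoeff, h2]
  simp [coeff_sub]

lemma cpoly_natDegree (n d : ℕ) : (cpoly n d).natDegree = 2 * d := by
  rw [cpoly, natDegree_prod _ _ (fun t _ => factor_ne _ _)]
  simp only [factor_natDegree, Finset.sum_const, Finset.card_range, smul_eq_mul]
  omega

lemma cpoly_coeff (n d : ℕ) : (cpoly n d).coeff (2 * d) = (-1 : ℂ) ^ d := by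
  have h := cpoly_natDegree n d
  rw [← h, ← leadingCoeff, cpoly, leadingCoeff_prod]
  simp only [factor_leadingCoeff, Finset.prod_const, Finset.card_range]

/-- The N-th finite difference of a polynomial of degree ≤ N is `N! * (top coeff)`. -/
lemma fwdDiff_poly (N : ℕ) : ∀ (P : Polynomial ℂ), P.natDegree ≤ N → ∀ x : ℂ,
    (fwdDiff (1 : ℂ))^[N] (fun t => P.eval t) x = (N.factorial : ℂ) * P.coeff N := by
  induction N with
  | zero =>
    intro P hP x
    rw [Function.iterate_zero_apply, eq_C_of_natDegree_le_zero hP]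
    simp
  | succ N ih =>
    intro P hP x
    have htc : ∀ j, P.natDegree ≤ j → (taylor (1 : ℂ) P).coeff j = P.coeff j := by
      intro j hj
      rw [taylor_coeff]
      have h0 : (hasseDeriv j P).natDegree ≤ 0 :=
        le_trans (natDegree_hasseDeriv_le _ _) (by omega)
      rw [eq_C_of_natDegree_le_zero h0, eval_C, hasseDeriv_coeff]
      simp
    set Q : Polynomial ℂ := taylor (1 : ℂ) P - P with hQ
    have hQdeg : Q.natDegree ≤ N := by
      rw [natDegree_le_iff_coeff_eq_zero]
      intro j hj
      rw [hQ, coeff_sub, htc j (by omega), sub_self]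
    have hQcoeff : Q.coeff N = ((N : ℂ) + 1) * P.coeff (N + 1) := by
      rw [hQ, coeff_sub, taylor_coeff]
      have h1 : (hasseDeriv N P).natDegree ≤ 1 :=
        le_trans (natDegree_hasseDeriv_le _ _) (by omega)
      rw [eq_X_add_C_of_natDegree_le_one h1]
      simp only [eval_add, eval_mul, eval_C, eval_X, mul_one, coeff_add, hasseDeriv_coeff]
      simp only [zero_add, Nat.choose_self, Nat.cast_one, one_mul]
      rw [show (1 + N).choose N = N + 1 by rw [add_comm]; exact Nat.choose_succ_self_right N]
      push_cast
      ring
    have hstep : fwdDiff (1 : ℂ) (fun t => P.eval t) = fun t => Q.eval t := by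
      funext t
      simp [fwdDiff, hQ, eval_sub, taylor_eval]
    rw [Function.iterate_succ_apply, hstep, ih Q hQdeg x, hQcoeff, Nat.factorial_succ]
    push_cast
    ring

/- ## Matrix entries part -/

noncomputable def cf (n d p : ℕ) : ℂ :=
  ∏ t ∈ Finset.range d, (((p : ℂ) + (t : ℂ) + 1) * ((n : ℂ) - (p : ℂ) - (t : ℂ)))

lemma cf_eq_eval (n d p : ℕ) : cf n d p = (cpoly n d).eval (p : ℂ) := by
  rw [cpoly_eval, cf]

lemma cf_vanish_high (n d p : ℕ) (hp : p ≤ n) (h : n < p + d) : cf n d p = 0 := by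
  apply Finset.prod_eq_zero (i := n - p) (Finset.mem_range.mpr (by omega))
  have hc : ((n - p : ℕ) : ℂ) = (n : ℂ) - (p : ℂ) := by
    push_cast [Nat.cast_sub hp]; ring
  rw [hc]; ring

lemma cpoly_vanish_low (n d k i : ℕ) (hk : k ≤ 2 * d) (hik : i < k) (hdi : d ≤ i) :
    (cpoly n d).eval ((i : ℂ) - (k : ℂ)) = 0 := by
  rw [cpoly_eval]
  apply Finset.prod_eq_zero (i := k - i - 1) (Finset.mem_range.mpr (by omega))
  have hc : ((k - i - 1 : ℕ) : ℂ) = (k : ℂ) - (i : ℂ) - 1 := by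
    have h : (k - i - 1) + (i + 1) = k := by omega
    have h2 := congrArg (fun t : ℕ => (t : ℂ)) h
    push_cast at h2
    linear_combination h2
  rw [hc]; ring

lemma sum_ite_nat {n : ℕ} (m : ℕ) (g : Fin (n + 1) → ℂ) :
    ∑ p : Fin (n + 1), (if (p : ℕ) = m then g p else 0)
      = if h : m ≤ n then g ⟨m, Nat.lt_succ_of_le h⟩ else 0 := by
  split_ifs with h
  · have hc : ∀ p : Fin (n + 1), (if (p : ℕ) = m then g p else 0)
        = (if p = ⟨m, Nat.lt_succ_of_le h⟩ then g p else 0) :=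
      fun p => if_congr ⟨fun hh => Fin.ext hh, fun hh => congrArg Fin.val hh⟩ rfl rfl
    rw [Finset.sum_congr rfl fun p _ => hc p]
    simp
  · apply Finset.sum_eq_zero
    intro p _
    exact if_neg fun hc => h (by have := p.isLt; omega)

lemma sum_ite_nat' {n : ℕ} (k : ℕ) (i : Fin (n + 1)) (g : Fin (n + 1) → ℂ) :
    ∑ p : Fin (n + 1), (if (i : ℕ) = (p : ℕ) + k then g p else 0)
      = if h : k ≤ (i : ℕ) then g ⟨(i : ℕ) - k, by omega⟩ else 0 := by
  split_ifs with h
  · have hcong : ∀ p : Fin (n + 1),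
        (if (i : ℕ) = (p : ℕ) + k then g p else 0)
          = (if (p : ℕ) = (i : ℕ) - k then g p else 0) :=
      fun p => if_congr (by omega) rfl rfl
    rw [Finset.sum_congr rfl fun p _ => hcong p, sum_ite_nat]
    rw [dif_pos (by omega)]
  · apply Finset.sum_eq_zero
    intro p _
    exact if_neg (by omega)

lemma Fpow_apply (n a : ℕ) (i j : Fin (n + 1)) :
    (Fmat n ^ a) i j = if (i : ℕ) = (j : ℕ) + a then 1 else 0 := by
  induction a generalizing j with
  | zero =>
    rw [pow_zero, Matrix.one_apply]
    exact if_congr (by rw [Fin.ext_iff]; omega) rfl rfl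
  | succ a ih =>
    rw [pow_succ, Matrix.mul_apply]
    have hterm : ∀ p : Fin (n + 1), (Fmat n ^ a) i p * Fmat n p j
        = if (p : ℕ) = (j : ℕ) + 1 then (if (i : ℕ) = (p : ℕ) + a then 1 else 0) else 0 := by
      intro p
      rw [ih p]
      simp only [Fmat, Matrix.of_apply]
      split_ifs <;> simp
    rw [Finset.sum_congr rfl fun p _ => hterm p, sum_ite_nat]
    by_cases h1 : (j : ℕ) + 1 ≤ n
    · rw [dif_pos h1]
      simp only [Fin.val_mk]
      exact if_congr (by omega) rfl rfl
    · rw [dif_neg h1, if_neg (by have := i.isLt; omega)]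

lemma Epow_apply (n d : ℕ) (i j : Fin (n + 1)) :
    (Emat n ^ d) i j = if (j : ℕ) = (i : ℕ) + d then cf n d (i : ℕ) else 0 := by
  induction d generalizing j with
  | zero =>
    rw [pow_zero, Matrix.one_apply]
    simp only [cf, Finset.range_zero, Finset.prod_empty, Nat.add_zero]
    exact if_congr (by rw [Fin.ext_iff]; omega) rfl rfl
  | succ d ih =>
    rw [pow_succ, Matrix.mul_apply]
    have hterm : ∀ q : Fin (n + 1), (Emat n ^ d) i q * Emat n q j
        = if (q : ℕ) = (i : ℕ) + d then
            (cf n d (i : ℕ) *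
              (if (j : ℕ) = (q : ℕ) + 1 then (((q : ℕ) : ℂ) + 1) * ((n : ℂ) - ((q : ℕ) : ℂ)) else 0))
          else 0 := by
      intro q
      rw [ih q]
      simp only [Emat, Matrix.of_apply]
      split_ifs <;> simp
    rw [Finset.sum_congr rfl fun q _ => hterm q, sum_ite_nat]
    have hcf : cf n (d + 1) (i : ℕ)
        = cf n d (i : ℕ) * ((((i : ℕ) : ℂ) + (d : ℂ) + 1) * ((n : ℂ) - ((i : ℕ) : ℂ) - (d : ℂ))) := by
      rw [cf, Finset.prod_range_succ]; rfl
    by_cases h1 : (i : ℕ) + d ≤ n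
    · rw [dif_pos h1]
      simp only
      by_cases hj : (j : ℕ) = (i : ℕ) + d + 1
      · rw [if_pos hj, if_pos (by omega), hcf]
        push_cast
        ring
      · rw [if_neg hj, if_neg (by omega), mul_zero]
    · rw [dif_neg h1, if_neg (by have := j.isLt; omega)]

lemma EF_apply (n d b : ℕ) (p j : Fin (n + 1)) :
    (Emat n ^ d * Fmat n ^ b) p j
      = if (p : ℕ) + d = (j : ℕ) + b then cf n d (p : ℕ) else 0 := by
  rw [Matrix.mul_apply]
  have hterm : ∀ q : Fin (n + 1), (Emat n ^ d) p q * (Fmat n ^ b) q j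
      = if (q : ℕ) = (j : ℕ) + b then
          (if (q : ℕ) = (p : ℕ) + d then cf n d (p : ℕ) else 0) else 0 := by
    intro q
    rw [Epow_apply, Fpow_apply]
    split_ifs <;> simp
  rw [Finset.sum_congr rfl fun q _ => hterm q, sum_ite_nat]
  by_cases h1 : (j : ℕ) + b ≤ n
  · rw [dif_pos h1]
    simp only [Fin.val_mk]
    exact if_congr (by omega) rfl rfl
  · rw [dif_neg h1]
    by_cases hc : (p : ℕ) + d = (j : ℕ) + b
    · rw [if_pos hc, cf_vanish_high n d (p : ℕ) (by have := p.isLt; omega) (by omega)]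
    · rw [if_neg hc]

lemma triple_apply (n d k b : ℕ) (i j : Fin (n + 1)) :
    (Fmat n ^ k * (Emat n ^ d * Fmat n ^ b)) i j
      = if k ≤ (i : ℕ) ∧ (i : ℕ) - k + d = (j : ℕ) + b
          then cf n d ((i : ℕ) - k) else 0 := by
  rw [Matrix.mul_apply]
  have hterm : ∀ p : Fin (n + 1), (Fmat n ^ k) i p * (Emat n ^ d * Fmat n ^ b) p j
      = if (i : ℕ) = (p : ℕ) + k then
          (if (p : ℕ) + d = (j : ℕ) + b then cf n d (p : ℕ) else 0) else 0 := by
    intro p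
    rw [Fpow_apply, EF_apply]
    split_ifs <;> simp
  rw [Finset.sum_congr rfl fun p _ => hterm p, sum_ite_nat' k i _]
  by_cases h1 : k ≤ (i : ℕ)
  · rw [dif_pos h1]
    simp only [Fin.val_mk]
    exact if_congr (by omega) rfl rfl
  · rw [dif_neg h1, if_neg (by omega)]

/- ## Iterate expansion -/

lemma adF_iter_eq (n m : ℕ) (X : Matrix (Fin (n + 1)) (Fin (n + 1)) ℂ) :
    (adF n)^[m] X = ∑ k ∈ Finset.range (m + 1),
      ((-1 : ℂ) ^ (m - k) * ((m.choose k : ℕ) : ℂ)) •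
        (Fmat n ^ k * (X * Fmat n ^ (m - k))) := by
  set L : Module.End ℂ (Matrix (Fin (n + 1)) (Fin (n + 1)) ℂ) :=
    LinearMap.mulLeft ℂ (Fmat n) with hL
  set R : Module.End ℂ (Matrix (Fin (n + 1)) (Fin (n + 1)) ℂ) :=
    LinearMap.mulRight ℂ (Fmat n) with hR
  have h1 : (adF n)^[m] X = ((L - R) ^ m) X := by
    induction m with
    | zero => simp
    | succ m ih =>
      rw [Function.iterate_succ_apply', ih, pow_succ', Module.End.mul_apply]
      show adF n _ = L _ - R _
      rw [hL, hR, LinearMap.mulLeft_apply, LinearMap.mulRight_apply, adF]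
  have h2 : Commute L (-R) :=
    (LinearMap.commute_mulLeft_right (R := ℂ) (Fmat n) (Fmat n)).neg_right
  have h3 : (L - R) ^ m
      = ∑ k ∈ Finset.range (m + 1), L ^ k * (-R) ^ (m - k) * (m.choose k : Module.End ℂ _) := by
    rw [sub_eq_add_neg]
    exact h2.add_pow m
  rw [h1, h3, LinearMap.sum_apply]
  refine Finset.sum_congr rfl fun k _ => ?_
  have hnegR : (-R) ^ (m - k) = ((-1 : ℂ) ^ (m - k)) • (R ^ (m - k)) := by
    rw [show -R = (-1 : ℂ) • R from (neg_one_smul ℂ R).symm, _root_.smul_pow]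
  rw [Module.End.mul_apply, Module.End.mul_apply, Module.End.natCast_apply, hnegR,
    LinearMap.smul_apply, LinearMap.map_smul]
  rw [hL, hR, LinearMap.pow_mulLeft, LinearMap.pow_mulRight, LinearMap.mulLeft_apply,
    LinearMap.mulRight_apply]
  rw [← Nat.cast_smul_eq_nsmul ℂ (m.choose k) X, smul_mul_assoc, mul_smul_comm, smul_smul]

/- ## Sign bookkeeping -/

lemma hsign (m : ℕ) : ∀ k ≤ m + m, ((-1 : ℂ)) ^ (m + m - k) = (-1) ^ k := by
  intro k hk
  have h1 : ((-1 : ℂ)) ^ (m + m - k) * (-1) ^ k = 1 := by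
    rw [← pow_add, Nat.sub_add_cancel hk, ← two_mul, pow_mul]
    norm_num
  have h2 : ((-1 : ℂ)) ^ k * (-1) ^ k = 1 := by
    rw [← pow_add, ← two_mul, pow_mul]
    norm_num
  calc ((-1 : ℂ)) ^ (m + m - k) = ((-1 : ℂ)) ^ (m + m - k) * (((-1 : ℂ)) ^ k * (-1) ^ k) := by
        rw [h2, mul_one]
    _ = (((-1 : ℂ)) ^ (m + m - k) * (-1) ^ k) * (-1) ^ k := by ring
    _ = (-1) ^ k := by rw [h1, one_mul]

lemma hsign' (d : ℕ) : ∀ k ≤ 2 * d, ((-1 : ℂ)) ^ (2 * d - k) = (-1) ^ k := by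
  intro k hk
  have := hsign d k (by omega)
  rwa [show d + d = 2 * d by ring] at this

/- ## The main matrix identity -/

lemma adF_pow_E (n d : ℕ) :
    (adF n)^[2 * d] (Emat n ^ d)
      = ((-1 : ℂ) ^ d * (((2 * d).factorial : ℕ) : ℂ)) • (Fmat n ^ d) := by
  ext i j
  rw [adF_iter_eq, Matrix.sum_apply, Matrix.smul_apply, Fpow_apply, smul_eq_mul]
  have hterm : ∀ k ∈ Finset.range (2 * d + 1),
      (((-1 : ℂ) ^ (2 * d - k) * (((2 * d).choose k : ℕ) : ℂ)) •
          (Fmat n ^ k * (Emat n ^ d * Fmat n ^ (2 * d - k)))) i j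
        = ((-1 : ℂ) ^ (2 * d - k) * (((2 * d).choose k : ℕ) : ℂ)) *
            (if k ≤ (i : ℕ) ∧ (i : ℕ) - k + d = (j : ℕ) + (2 * d - k)
              then cf n d ((i : ℕ) - k) else 0) := by
    intro k _
    rw [Matrix.smul_apply, triple_apply, smul_eq_mul]
  rw [Finset.sum_congr rfl hterm]
  by_cases hij : (i : ℕ) = (j : ℕ) + d
  · rw [if_pos hij, mul_one]
    have hin := i.isLt
    have hjn := j.isLt
    have hsimp : ∀ k ∈ Finset.range (2 * d + 1),
        ((-1 : ℂ) ^ (2 * d - k) * (((2 * d).choose k : ℕ) : ℂ)) *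
            (if k ≤ (i : ℕ) ∧ (i : ℕ) - k + d = (j : ℕ) + (2 * d - k)
              then cf n d ((i : ℕ) - k) else 0)
          = ((-1 : ℂ) ^ (2 * d - k) * (((2 * d).choose k : ℕ) : ℂ)) *
              (cpoly n d).eval ((i : ℂ) - (k : ℂ)) := by
      intro k hk
      rw [Finset.mem_range] at hk
      congr 1
      by_cases hki : k ≤ (i : ℕ)
      · rw [if_pos ⟨hki, by omega⟩, cf_eq_eval, Nat.cast_sub hki]
      · rw [if_neg (by omega)]
        exact (cpoly_vanish_low n d k (i : ℕ) (by omega) (by omega) (by omega)).symm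
    rw [Finset.sum_congr rfl hsimp]
    -- reflect and identify with the forward difference
    have hrefl := Finset.sum_range_reflect
      (fun k => ((-1 : ℂ) ^ (2 * d - k) * (((2 * d).choose k : ℕ) : ℂ)) *
        (cpoly n d).eval ((i : ℂ) - (k : ℂ))) (2 * d + 1)
    rw [← hrefl]
    have hfd := fwdDiff_iter_eq_sum_shift (1 : ℂ) (fun t => (cpoly n d).eval t) (2 * d)
      ((i : ℂ) - ((2 * d : ℕ) : ℂ))
    rw [fwdDiff_poly (2 * d) (cpoly n d) (le_of_eq (cpoly_natDegree n d)), cpoly_coeff] at hfd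
    have hmatch : ∀ k ∈ Finset.range (2 * d + 1),
        ((-1 : ℂ) ^ (2 * d - (2 * d + 1 - 1 - k)) *
            (((2 * d).choose (2 * d + 1 - 1 - k) : ℕ) : ℂ)) *
          (cpoly n d).eval ((i : ℂ) - ((2 * d + 1 - 1 - k : ℕ) : ℂ))
        = ((-1 : ℤ) ^ (2 * d - k) * ((2 * d).choose k : ℤ)) •
            (cpoly n d).eval (((i : ℂ) - ((2 * d : ℕ) : ℂ)) + k • (1 : ℂ)) := by
      intro k hk
      rw [Finset.mem_range] at hk
      rw [show 2 * d + 1 - 1 - k = 2 * d - k from by omega]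
      rw [show 2 * d - (2 * d - k) = k from by omega]
      rw [Nat.choose_symm (by omega : k ≤ 2 * d)]
      rw [zsmul_eq_mul, Int.cast_mul, Int.cast_pow, Int.cast_neg, Int.cast_one, Int.cast_natCast]
      rw [hsign' d k (by omega)]
      have harg : (i : ℂ) - ((2 * d - k : ℕ) : ℂ)
          = ((i : ℂ) - ((2 * d : ℕ) : ℂ)) + k • (1 : ℂ) := by
        rw [Nat.cast_sub (by omega : k ≤ 2 * d), nsmul_eq_mul, mul_one]
        ring
      rw [harg]
    rw [Finset.sum_congr rfl hmatch, ← hfd]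
    ring
  · rw [if_neg hij, mul_zero]
    apply Finset.sum_eq_zero
    intro k hk
    rw [Finset.mem_range] at hk
    rw [if_neg (by omega), mul_zero]

end Stmt13Aux

/-- `Tr(ad[f]^{2d}(e^d) · e^d) = (-1)^d (2d)! Tr(e^d f^d)`. -/
theorem stmt13 (n d : ℕ) (hd : d ≤ n) :
    ((adF n)^[2 * d] ((Emat n) ^ d) * (Emat n) ^ d).trace
      = (-1 : ℂ) ^ d * (Nat.factorial (2 * d) : ℂ)
          * ((Emat n) ^ d * (Fmat n) ^ d).trace := by
  rw [Stmt13Aux.adF_pow_E n d, smul_mul_assoc, trace_smul, trace_mul_comm, smul_eq_mul]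
end
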